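/- arXiv:1812.09216 — 4 statements merged into one kernel-verified Lean document; each statement's English description precedes it below -/
import Mathlib

section
/- Let F be a nonempty set of measurement assemblages on ℂ^d, let (M_{a|x}) be a measurement assemblage, and let (Y^{a|x}) be a family of positive semidefinite d×d matrices with Σ_{a,x} tr Y^{a|x} > 0 and such that Σ_{a,x} tr(T_{a|x} Y^{a|x}) ≤ 1 for every T ∈ F. Define the state ensemble σ_{a|x} = Y^{a|x} / (Σ_{a',x'} tr Y^{a'|x'}). Then p_succ(M,σ) ≥ (Σ_{a,x} tr(M_{a|x} Y^{a|x})) · sup_{O∈F} p_succ(O,σ). -/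
open Matrix BigOperators ComplexOrder

noncomputable section

/-- A POVM on `ℂ^d` with outcome set `A`: positive semidefinite operators summing to `𝟙`. -/
def IsPOVM {d : ℕ} {A : Type*} [Fintype A] (M : A → Matrix (Fin d) (Fin d) ℂ) : Prop :=
  (∀ a, (M a).PosSemidef) ∧ ∑ a, M a = 1

/-- A measurement assemblage: for each input `x`, a POVM `(M x a)_a`. -/
def IsMeasAssemblage {d : ℕ} {X A : Type*} [Fintype A]
    (M : X → A → Matrix (Fin d) (Fin d) ℂ) : Prop :=
  ∀ x, IsPOVM (M x)

/-- A state ensemble with prior information: positive semidefinite operators with total trace 1. -/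
def IsEnsemble {d : ℕ} {X A : Type*} [Fintype X] [Fintype A]
    (σ : X → A → Matrix (Fin d) (Fin d) ℂ) : Prop :=
  (∀ x a, (σ x a).PosSemidef) ∧ ∑ x, ∑ a, (σ x a).trace = 1

/-- Success probability of a measurement assemblage on a state ensemble with prior information. -/
def pSucc {d : ℕ} {X A : Type*} [Fintype X] [Fintype A]
    (M σ : X → A → Matrix (Fin d) (Fin d) ℂ) : ℝ :=
  (∑ x, ∑ a, (M x a * σ x a).trace).re

/-- Generalized robustness of a measurement assemblage with respect to a free set `F`. -/
def GenRobustness {d : ℕ} {X A : Type*} [Fintype X] [Fintype A]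
    (F : Set (X → A → Matrix (Fin d) (Fin d) ℂ))
    (M : X → A → Matrix (Fin d) (Fin d) ℂ) : ℝ :=
  sInf { t : ℝ | 0 ≤ t ∧ ∃ N : X → A → Matrix (Fin d) (Fin d) ℂ,
    IsMeasAssemblage N ∧ (fun x a => (1 + t)⁻¹ • (M x a + t • N x a)) ∈ F }

/-- The state ensemble obtained by normalizing a family of positive semidefinite operators. -/
def normalizedEnsemble {d : ℕ} {X A : Type*} [Fintype X] [Fintype A]
    (Y : X → A → Matrix (Fin d) (Fin d) ℂ) : X → A → Matrix (Fin d) (Fin d) ℂ :=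
  fun x a => ((∑ x', ∑ a', (Y x' a').trace).re)⁻¹ • Y x a


lemma psd_trace_re_nonneg {d : ℕ} {P : Matrix (Fin d) (Fin d) ℂ} (hP : P.PosSemidef) :
    0 ≤ P.trace.re := by
  rw [Matrix.trace]
  simp only [Complex.re_sum]
  apply Finset.sum_nonneg
  intro i _
  have h : 0 ≤ P.diag i := hP.diag_nonneg
  exact (Complex.le_def.mp h).1

lemma psd_trace_mul_re_nonneg {d : ℕ} {P Q : Matrix (Fin d) (Fin d) ℂ}
    (hP : P.PosSemidef) (hQ : Q.PosSemidef) : 0 ≤ ((P * Q).trace).re := by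
  open scoped MatrixOrder in
  obtain ⟨B, rfl⟩ := CStarAlgebra.nonneg_iff_eq_star_mul_self.mp hP.nonneg
  rw [Matrix.mul_assoc, Matrix.trace_mul_comm]
  exact psd_trace_re_nonneg (hQ.mul_mul_conjTranspose_same B)

lemma pSucc_normalized {d : ℕ} {X A : Type*} [Fintype X] [Fintype A]
    (M Y : X → A → Matrix (Fin d) (Fin d) ℂ) :
    pSucc M (normalizedEnsemble Y)
      = ((∑ x, ∑ a, (Y x a).trace).re)⁻¹ * (∑ x, ∑ a, (M x a * Y x a).trace).re := by
  unfold pSucc normalizedEnsemble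
  simp only [Matrix.mul_smul, Matrix.trace_smul, Complex.re_sum, Complex.smul_re,
    smul_eq_mul, Finset.mul_sum]

/-- Given a positive semidefinite witness family `Y` normalized on the free set `F`
(`∑ tr(T Y) ≤ 1` for all `T ∈ F`), the ensemble `σ = Y / tr Y` satisfies
`p_succ(M,σ) ≥ (∑ tr(M Y)) · sup_{O ∈ F} p_succ(O,σ)`. -/
theorem witness_gives_discrimination_advantage
    {d : ℕ} {X A : Type*} [Fintype X] [Fintype A]
    (F : Set (X → A → Matrix (Fin d) (Fin d) ℂ))
    (hFne : F.Nonempty) (hFmem : ∀ T ∈ F, IsMeasAssemblage T)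
    (M : X → A → Matrix (Fin d) (Fin d) ℂ) (hM : IsMeasAssemblage M)
    (Y : X → A → Matrix (Fin d) (Fin d) ℂ) (hY : ∀ x a, (Y x a).PosSemidef)
    (hYtr : 0 < (∑ x, ∑ a, (Y x a).trace).re)
    (hYnorm : ∀ T ∈ F, (∑ x, ∑ a, (T x a * Y x a).trace).re ≤ 1) :
    (∑ x, ∑ a, (M x a * Y x a).trace).re *
        sSup { p : ℝ | ∃ O ∈ F, p = pSucc O (normalizedEnsemble Y) }
      ≤ pSucc M (normalizedEnsemble Y) := by
  set c := (∑ x, ∑ a, (Y x a).trace).re with hc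
  set S := (∑ x, ∑ a, (M x a * Y x a).trace).re with hS
  have hSnonneg : 0 ≤ S := by
    rw [hS, Complex.re_sum]
    apply Finset.sum_nonneg; intro x _
    rw [Complex.re_sum]
    exact Finset.sum_nonneg fun a _ => psd_trace_mul_re_nonneg ((hM x).1 a) (hY x a)
  have hsup : sSup { p : ℝ | ∃ O ∈ F, p = pSucc O (normalizedEnsemble Y) } ≤ c⁻¹ := by
    apply Real.sSup_le
    · rintro p ⟨O, hO, rfl⟩
      rw [pSucc_normalized]
      calc c⁻¹ * (∑ x, ∑ a, (O x a * Y x a).trace).re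
          ≤ c⁻¹ * 1 := by
            apply mul_le_mul_of_nonneg_left (hYnorm O hO) (inv_nonneg.mpr hYtr.le)
        _ = c⁻¹ := mul_one _
    · exact inv_nonneg.mpr hYtr.le
  calc S * sSup { p : ℝ | ∃ O ∈ F, p = pSucc O (normalizedEnsemble Y) }
      ≤ S * c⁻¹ := mul_le_mul_of_nonneg_left hsup hSnonneg
    _ = c⁻¹ * S := mul_comm _ _
    _ = pSucc M (normalizedEnsemble Y) := (pSucc_normalized M Y).symm
end
end

section
/- Fix a dimension d and finite sets X, A. Let (Y^{a|x})_{x∈X,a∈A} be positive semidefinite d×d matrices and suppose there exists a Hermitian d×d matrix Z such that for every function λ : X → A one has Σ_{x∈X} Y^{λ(x)|x} ≤ (1/d)(1 − tr Z)·𝟙 + Z (in the positive semidefinite order). Then for every jointly measurable measurement assemblage (O_{a|x}) on ℂ^d, Σ_{a,x} tr(O_{a|x} Y^{a|x}) ≤ 1. -/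
open Matrix BigOperators ComplexOrder

noncomputable section

/-- Joint measurability: there is a parent POVM `G` and post-processings `p` with
`M x a = ∑ λ, p(a|x,λ) G λ`. -/
def IsJointlyMeasurable {d : ℕ} {X A : Type*} [Fintype X] [Fintype A]
    (M : X → A → Matrix (Fin d) (Fin d) ℂ) : Prop :=
  ∃ (L : ℕ) (G : Fin L → Matrix (Fin d) (Fin d) ℂ) (p : A → X → Fin L → ℝ),
    IsPOVM G ∧ (∀ a x l, 0 ≤ p a x l) ∧ (∀ x l, ∑ a, p a x l = 1) ∧
    ∀ x a, M x a = ∑ l, (p a x l : ℂ) • G l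


lemma psd_trace_nonneg {d : ℕ} {M : Matrix (Fin d) (Fin d) ℂ} (h : M.PosSemidef) :
    0 ≤ M.trace := by
  refine Finset.sum_nonneg fun i _ => ?_
  have := h.dotProduct_mulVec_nonneg (Pi.single i 1)
  simpa [Matrix.mulVec, dotProduct, Pi.single_apply] using this

lemma psd_trace_mul_nonneg {d : ℕ} {G P : Matrix (Fin d) (Fin d) ℂ}
    (hG : G.PosSemidef) (hP : P.PosSemidef) : 0 ≤ (G * P).trace := by
  obtain ⟨B, rfl⟩ : ∃ B : Matrix (Fin d) (Fin d) ℂ, P = Bᴴ * B := by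
    open scoped MatrixOrder in exact CStarAlgebra.nonneg_iff_eq_star_mul_self.mp hP.nonneg
  rw [← Matrix.mul_assoc, Matrix.trace_mul_comm, ← Matrix.mul_assoc]
  exact psd_trace_nonneg (hG.mul_mul_conjTranspose_same B)

lemma psd_real_smul {d : ℕ} {r : ℝ} (hr : 0 ≤ r) {M : Matrix (Fin d) (Fin d) ℂ}
    (hM : M.PosSemidef) : ((r : ℂ) • M).PosSemidef := by
  refine .of_dotProduct_mulVec_nonneg ?_ ?_
  · unfold Matrix.IsHermitian
    rw [Matrix.conjTranspose_smul, hM.1.eq]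
    congr 1
    simp
  · intro x
    rw [Matrix.smul_mulVec, dotProduct_smul, smul_eq_mul]
    exact mul_nonneg (by exact_mod_cast Complex.zero_le_real.mpr hr) (hM.dotProduct_mulVec_nonneg x)

lemma weight_sum {X A : Type*} [Fintype X] [Fintype A] [DecidableEq X] [DecidableEq A]
    (f : X → A → ℂ) (hf : ∀ x, ∑ a, f x a = 1) (x0 : X) (a0 : A) :
    ∑ lam : X → A, (if lam x0 = a0 then ∏ x, f x (lam x) else 0) = f x0 a0 := by
  have key : ∀ lam : X → A, (if lam x0 = a0 then ∏ x, f x (lam x) else 0)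
      = ∏ x, ((if x = x0 then (if lam x = a0 then (1:ℂ) else 0) else 1) * f x (lam x)) := by
    intro lam
    rw [Finset.prod_mul_distrib, Finset.prod_ite_eq' Finset.univ x0
      (fun x => if lam x = a0 then (1:ℂ) else 0)]
    simp only [Finset.mem_univ, if_true]
    by_cases h : lam x0 = a0 <;> simp [h]
  simp only [key]
  rw [← Fintype.prod_sum (fun x a => (if x = x0 then (if a = a0 then (1:ℂ) else 0) else 1) * f x a)]
  have : ∀ x, (∑ a, (if x = x0 then (if a = a0 then (1:ℂ) else 0) else 1) * f x a)
      = if x = x0 then f x0 a0 else 1 := by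
    intro x
    by_cases h : x = x0
    · subst h
      simp [Finset.sum_ite_eq' Finset.univ a0 (fun a => f x a)]
    · simp [h, hf x]
  rw [Finset.prod_congr rfl (fun x _ => this x), Finset.prod_ite_eq' Finset.univ x0
    (fun _ => f x0 a0)]
  simp

lemma weight_smul_sum {d : ℕ} {X A : Type*} [Fintype X] [Fintype A] [DecidableEq X]
    [DecidableEq A] (f : X → A → ℂ) (hf : ∀ x, ∑ a, f x a = 1) (x0 : X)
    (M : A → Matrix (Fin d) (Fin d) ℂ) :
    ∑ lam : X → A, (∏ x, f x (lam x)) • M (lam x0) = ∑ a, f x0 a • M a := by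
  have : ∀ lam : X → A, (∏ x, f x (lam x)) • M (lam x0)
      = ∑ a, (if lam x0 = a then (∏ x, f x (lam x)) else 0) • M a := by
    intro lam
    simp only [ite_smul, zero_smul]
    rw [Finset.sum_ite_eq Finset.univ (lam x0) (fun a => (∏ x, f x (lam x)) • M a)]
    simp
  simp only [this]
  rw [Finset.sum_comm]
  refine Finset.sum_congr rfl fun a _ => ?_
  rw [← Finset.sum_smul, weight_sum f hf x0 a]

/-- Dual feasibility bound (Appendix B): if the witness family `Y` admits a Hermitian `Z`
with `∑_x Y^{λ(x)|x} ≤ (1/d)(1 − tr Z)𝟙 + Z` for every deterministic strategy `λ : X → A`,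
then every jointly measurable assemblage `O` satisfies `∑_{a,x} tr(O_{a|x} Y^{a|x}) ≤ 1`. -/
theorem jointly_measurable_success_bound
    {d : ℕ} (hd : 0 < d) {X A : Type*} [Fintype X] [Fintype A]
    (Y : X → A → Matrix (Fin d) (Fin d) ℂ) (hY : ∀ x a, (Y x a).PosSemidef)
    (hZ : ∃ Z : Matrix (Fin d) (Fin d) ℂ, Z.IsHermitian ∧
      ∀ lam : X → A,
        (((d : ℂ)⁻¹ * (1 - Z.trace)) • (1 : Matrix (Fin d) (Fin d) ℂ) + Z
            - ∑ x, Y x (lam x)).PosSemidef) :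
    ∀ O : X → A → Matrix (Fin d) (Fin d) ℂ,
      IsMeasAssemblage O → IsJointlyMeasurable O →
        (∑ x, ∑ a, (O x a * Y x a).trace).re ≤ 1 := by
  classical
  obtain ⟨Z, hZherm, hZpsd⟩ := hZ
  intro O hO ⟨L, G, p, ⟨hGpsd, hGsum⟩, hp0, hp1, hOeq⟩
  set C : Matrix (Fin d) (Fin d) ℂ :=
    ((d : ℂ)⁻¹ * (1 - Z.trace)) • (1 : Matrix (Fin d) (Fin d) ℂ) + Z with hC
  set W : Fin L → Matrix (Fin d) (Fin d) ℂ :=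
    fun l => ∑ x, ∑ a, (p a x l : ℂ) • Y x a with hW
  -- Step A
  have hS : ∑ x, ∑ a, (O x a * Y x a).trace = ∑ l, (G l * W l).trace := by
    simp only [hOeq, hW, Finset.sum_mul, Matrix.mul_sum, Matrix.smul_mul, Matrix.mul_smul,
      Matrix.trace_sum, Matrix.trace_smul]
    rw [show (∑ l : Fin L, ∑ x : X, ∑ a : A, (p a x l : ℂ) • (G l * Y x a).trace)
        = ∑ x : X, ∑ l : Fin L, ∑ a : A, (p a x l : ℂ) • (G l * Y x a).trace from
      Finset.sum_comm]
    exact Finset.sum_congr rfl fun x _ => Finset.sum_comm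
  -- Step B
  have hCW : ∀ l, (C - W l).PosSemidef := by
    intro l
    have hf : ∀ x, ∑ a, ((p a x l : ℝ) : ℂ) = 1 := by
      intro x
      rw [← Complex.ofReal_sum]
      exact_mod_cast congrArg Complex.ofReal (hp1 x l)
    have hsum1 : ∑ lam : X → A, ∏ x, ((p (lam x) x l : ℝ) : ℂ) = 1 := by
      rw [← Fintype.prod_sum (fun x a => ((p a x l : ℝ) : ℂ))]
      simp [hf]
    have hWdec : W l = ∑ lam : X → A, (∏ x, ((p (lam x) x l : ℝ) : ℂ)) • ∑ x, Y x (lam x) := by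
      rw [hW]
      have : ∀ lam : X → A, (∏ x, ((p (lam x) x l : ℝ) : ℂ)) • ∑ x, Y x (lam x)
          = ∑ x, (∏ x', ((p (lam x') x' l : ℝ) : ℂ)) • Y x (lam x) := by
        intro lam; rw [Finset.smul_sum]
      rw [Finset.sum_congr rfl fun lam _ => this lam, Finset.sum_comm]
      exact Finset.sum_congr rfl fun x _ =>
        (weight_smul_sum (fun x a => ((p a x l : ℝ) : ℂ)) hf x (fun a => Y x a)).symm
    have hCdec : C - W l = ∑ lam : X → A,
        (∏ x, ((p (lam x) x l : ℝ) : ℂ)) • (C - ∑ x, Y x (lam x)) := by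
      rw [hWdec]
      simp only [smul_sub, Finset.sum_sub_distrib, ← Finset.sum_smul, hsum1, one_smul]
    rw [hCdec]
    refine Finset.sum_induction _ _ (fun a b ha hb => ha.add hb) Matrix.PosSemidef.zero ?_
    intro lam _
    have hw : (0:ℝ) ≤ ∏ x, p (lam x) x l := Finset.prod_nonneg fun x _ => hp0 _ _ _
    have : (∏ x, ((p (lam x) x l : ℝ) : ℂ)) = ((∏ x, p (lam x) x l : ℝ) : ℂ) := by push_cast; ring
    rw [this]
    exact psd_real_smul hw (hZpsd lam)
  -- Step C
  have hCtrace : C.trace = 1 := by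
    rw [hC, Matrix.trace_add, Matrix.trace_smul, Matrix.trace_one]
    have hd' : (d : ℂ) ≠ 0 := Nat.cast_ne_zero.mpr hd.ne'
    field_simp
    rw [Fintype.card_fin, smul_eq_mul, div_mul_cancel₀ _ hd']
    ring
  have hGC : ∑ l, (G l * C).trace = 1 := by
    rw [← Matrix.trace_sum, ← Finset.sum_mul, hGsum, one_mul, hCtrace]
  -- Final
  have hpos : 0 ≤ 1 - ∑ x, ∑ a, (O x a * Y x a).trace := by
    rw [hS, ← hGC, ← Finset.sum_sub_distrib]
    refine Finset.sum_nonneg fun l _ => ?_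
    rw [← Matrix.trace_sub, ← Matrix.mul_sub]
    exact psd_trace_mul_nonneg (hGpsd l) (hCW l)
  have := (Complex.le_def.mp hpos).1
  simp only [Complex.sub_re, Complex.one_re, Complex.zero_re] at this
  linarith
end
end

section
/- Let Λ = (Λ_a)_{a∈A} be an instrument on ℂ^d given in Kraus form, let F_S be a set of density matrices on ℂ^d, and let F_E = { (Λ_a(σ))_{a∈A} : σ ∈ F_S } be the set of state ensembles obtained by applying the instrument to free states. Define the ensemble robustness of the ensemble (Λ_a(ρ))_a by R_ens((Λ_a(ρ))) = inf{ t ≥ 0 : there exists a density matrix τ on ℂ^d with (Λ_a(ρ) + t Λ_a(τ))/(1+t) ∈ F_E componentwise }, and the state robustness R_S(ρ) = inf{ t ≥ 0 : there exists a density matrix τ with (ρ + t τ)/(1+t) ∈ F_S }. Then for every density matrix ρ on ℂ^d, R_ens((Λ_a(ρ))) ≤ R_S(ρ). -/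
open Matrix BigOperators ComplexOrder ENNReal

noncomputable section

/-- A density matrix on `ℂ^d`: positive semidefinite with unit trace. -/
def IsDensity {d : ℕ} (ρ : Matrix (Fin d) (Fin d) ℂ) : Prop :=
  ρ.PosSemidef ∧ ρ.trace = 1

/-- An instrument in Kraus form with outcome set `A`: Kraus operators summing to a
trace-preserving map. -/
def IsInstrument {d : ℕ} {A : Type*} [Fintype A] {m : ℕ}
    (K : A → Fin m → Matrix (Fin d) (Fin d) ℂ) : Prop :=
  ∑ a, ∑ k, (K a k)ᴴ * K a k = 1

/-- The subchannel `Λ_a` of an instrument in Kraus form. -/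
def subCh {d : ℕ} {A : Type*} {m : ℕ} (K : A → Fin m → Matrix (Fin d) (Fin d) ℂ)
    (a : A) (τ : Matrix (Fin d) (Fin d) ℂ) : Matrix (Fin d) (Fin d) ℂ :=
  ∑ k, K a k * τ * (K a k)ᴴ

/-- Robustness (valued in `ℝ≥0∞`, with `inf ∅ = ∞`) of the state ensemble `(Λ_a ρ)_a`
with respect to the set of ensembles produced by the instrument `K` from states in `FS`,
where the noise is also restricted to ensembles produced by the instrument. -/
def EnsembleRobustness {d : ℕ} {A : Type*} [Fintype A] {m : ℕ}
    (K : A → Fin m → Matrix (Fin d) (Fin d) ℂ)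
    (FS : Set (Matrix (Fin d) (Fin d) ℂ)) (ρ : Matrix (Fin d) (Fin d) ℂ) : ℝ≥0∞ :=
  sInf { s : ℝ≥0∞ | ∃ t : ℝ, 0 ≤ t ∧ s = ENNReal.ofReal t ∧
    ∃ τ : Matrix (Fin d) (Fin d) ℂ, IsDensity τ ∧
      (fun a => (1 + t)⁻¹ • (subCh K a ρ + t • subCh K a τ)) ∈
        (fun σ => fun a => subCh K a σ) '' FS }

/-- Robustness (valued in `ℝ≥0∞`, with `inf ∅ = ∞`) of a state with respect to a free set
`FS` of states. -/
def StateRobustness {d : ℕ} (FS : Set (Matrix (Fin d) (Fin d) ℂ))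
    (ρ : Matrix (Fin d) (Fin d) ℂ) : ℝ≥0∞ :=
  sInf { s : ℝ≥0∞ | ∃ t : ℝ, 0 ≤ t ∧ s = ENNReal.ofReal t ∧
    ∃ τ : Matrix (Fin d) (Fin d) ℂ, IsDensity τ ∧ (1 + t)⁻¹ • (ρ + t • τ) ∈ FS }

section subCh

variable {d : ℕ} {A : Type*} {m : ℕ} (K : A → Fin m → Matrix (Fin d) (Fin d) ℂ) (a : A)

lemma subCh_add (x y : Matrix (Fin d) (Fin d) ℂ) :
    subCh K a (x + y) = subCh K a x + subCh K a y := by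
  simp only [subCh, mul_add, add_mul, Finset.sum_add_distrib]

lemma subCh_smul {R : Type*} [Monoid R] [DistribMulAction R ℂ] [IsScalarTower R ℂ ℂ]
    [SMulCommClass R ℂ ℂ] (c : R) (x : Matrix (Fin d) (Fin d) ℂ) :
    subCh K a (c • x) = c • subCh K a x := by
  simp only [subCh, Finset.smul_sum, mul_smul_comm, smul_mul_assoc]

lemma subCh_mixture (t : ℝ) (ρ τ : Matrix (Fin d) (Fin d) ℂ) :
    subCh K a ((1 + t)⁻¹ • (ρ + t • τ)) = (1 + t)⁻¹ • (subCh K a ρ + t • subCh K a τ) := by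
  rw [subCh_smul, subCh_add, subCh_smul]

end subCh

theorem ensembleRobustness_le_stateRobustness_general
    {d : ℕ} {A : Type*} [Fintype A] {m : ℕ}
    (K : A → Fin m → Matrix (Fin d) (Fin d) ℂ)
    (FS : Set (Matrix (Fin d) (Fin d) ℂ))
    (ρ : Matrix (Fin d) (Fin d) ℂ) :
    EnsembleRobustness K FS ρ ≤ StateRobustness FS ρ := by
  -- A mixture witnessing `t` for `ρ` is mapped by each linear `Λ_a` to one witnessing `t`
  -- for the ensemble, with the same noise `τ`.
  refine sInf_le_sInf ?_
  rintro s ⟨t, ht, rfl, τ, hτ, hfree⟩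
  exact ⟨t, ht, rfl, τ, hτ, _, hfree, funext fun a => subCh_mixture K a t ρ τ⟩

/-- The robustness of the ensemble obtained by applying an instrument to a state `ρ`,
relative to the ensembles obtained from free states, is at most the robustness of `ρ`
relative to the free states. -/
theorem ensembleRobustness_le_stateRobustness
    {d : ℕ} {A : Type*} [Fintype A] {m : ℕ}
    (K : A → Fin m → Matrix (Fin d) (Fin d) ℂ) (hK : IsInstrument K)
    (FS : Set (Matrix (Fin d) (Fin d) ℂ)) (hFS : ∀ σ ∈ FS, IsDensity σ)
    (ρ : Matrix (Fin d) (Fin d) ℂ) (hρ : IsDensity ρ) :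
    EnsembleRobustness K FS ρ ≤ StateRobustness FS ρ :=
  ensembleRobustness_le_stateRobustness_general K FS ρ
end
end

section
/- Fix d_B, n ≥ 1 and finite sets X, A. The set S_n of families (ρ_{a|x})_{x∈X,a∈A} of positive semidefinite d_B×d_B matrices for which there exist a dimension d_A, a measurement assemblage (A_{a|x}) on ℂ^{d_A}, and a density matrix ρ on ℂ^{d_A}⊗ℂ^{d_B} of Schmidt number at most n such that ρ_{a|x} = tr_A[(A_{a|x} ⊗ 𝟙) ρ] for all a,x, is a convex set. -/
open Matrix BigOperators ComplexOrder Kronecker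

noncomputable section

/-- Partial trace over the first tensor factor. -/
def ptrA {dA dB : ℕ} (M : Matrix (Fin dA × Fin dB) (Fin dA × Fin dB) ℂ) :
    Matrix (Fin dB) (Fin dB) ℂ :=
  Matrix.of fun j j' => ∑ i, M (i, j) (i, j')

/-- The Schmidt rank of a vector `ψ ∈ ℂ^{d_A} ⊗ ℂ^{d_B}` is at most `n`: the matrix of its
coefficients has rank at most `n`. -/
def SchmidtRankLE {dA dB : ℕ} (n : ℕ) (ψ : Fin dA × Fin dB → ℂ) : Prop :=
  (Matrix.of fun (i : Fin dA) (j : Fin dB) => ψ (i, j)).rank ≤ n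

/-- A matrix on `ℂ^{d_A} ⊗ ℂ^{d_B}` has Schmidt number at most `n`: it is a finite convex
combination of projectors onto unit vectors of Schmidt rank at most `n`. -/
def SchmidtNumberLE {dA dB : ℕ} (n : ℕ)
    (ρ : Matrix (Fin dA × Fin dB) (Fin dA × Fin dB) ℂ) : Prop :=
  ∃ (k : ℕ) (p : Fin k → ℝ) (ψ : Fin k → (Fin dA × Fin dB → ℂ)),
    (∀ i, 0 ≤ p i) ∧ (∑ i, p i = 1) ∧
    (∀ i, ∑ v, star (ψ i v) * ψ i v = 1) ∧
    (∀ i, SchmidtRankLE n (ψ i)) ∧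
    ρ = ∑ i, (p i : ℂ) • Matrix.vecMulVec (ψ i) (star (ψ i))

/-- The set of state assemblages on Bob's side `ℂ^{d_B}` preparable, for some dimension
`d_A` of Alice, by Alice's measurements on a shared state of Schmidt number at most `n`. -/
def SchmidtAssemblages (dB n : ℕ) (X A : Type*) [Fintype X] [Fintype A] :
    Set (X → A → Matrix (Fin dB) (Fin dB) ℂ) :=
  { ρf | ∃ (dA : ℕ) (Am : X → A → Matrix (Fin dA) (Fin dA) ℂ)
      (ρ : Matrix (Fin dA × Fin dB) (Fin dA × Fin dB) ℂ),
      IsMeasAssemblage Am ∧ ρ.PosSemidef ∧ ρ.trace = 1 ∧ SchmidtNumberLE n ρ ∧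
      ∀ x a, ρf x a = ptrA ((Am x a ⊗ₖ (1 : Matrix (Fin dB) (Fin dB) ℂ)) * ρ) }


/-! ### Auxiliary material for the convexity proof -/

section Aux

lemma ptrA_sum {dA dB : ℕ} {k : Type*} [Fintype k]
    (f : k → Matrix (Fin dA × Fin dB) (Fin dA × Fin dB) ℂ) :
    ptrA (∑ i, f i) = ∑ i, ptrA (f i) := by
  ext j j'
  simp only [ptrA, Matrix.of_apply, Matrix.sum_apply]
  rw [Finset.sum_comm]

lemma ptrA_smul {dA dB : ℕ} (c : ℂ) (M : Matrix (Fin dA × Fin dB) (Fin dA × Fin dB) ℂ) :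
    ptrA (c • M) = c • ptrA M := by
  ext j j'
  simp [ptrA, Finset.mul_sum]

def emb1 {d1 dB : ℕ} (d2 : ℕ) (ψ : Fin d1 × Fin dB → ℂ) : Fin (d1 + d2) × Fin dB → ℂ :=
  fun p => Fin.addCases (fun i => ψ (i, p.2)) (fun _ => 0) p.1

def emb2 {d2 dB : ℕ} (d1 : ℕ) (ψ : Fin d2 × Fin dB → ℂ) : Fin (d1 + d2) × Fin dB → ℂ :=
  fun p => Fin.addCases (fun _ => 0) (fun i => ψ (i, p.2)) p.1

@[simp] lemma emb1_cast {d1 d2 dB : ℕ} (ψ : Fin d1 × Fin dB → ℂ) (i : Fin d1) (j : Fin dB) :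
    emb1 d2 ψ (Fin.castAdd d2 i, j) = ψ (i, j) := by simp [emb1]

@[simp] lemma emb1_nat {d1 d2 dB : ℕ} (ψ : Fin d1 × Fin dB → ℂ) (i : Fin d2) (j : Fin dB) :
    emb1 d2 ψ (Fin.natAdd d1 i, j) = 0 := by simp [emb1]

@[simp] lemma emb2_cast {d1 d2 dB : ℕ} (ψ : Fin d2 × Fin dB → ℂ) (i : Fin d1) (j : Fin dB) :
    emb2 d1 ψ (Fin.castAdd d2 i, j) = 0 := by simp [emb2]

@[simp] lemma emb2_nat {d1 d2 dB : ℕ} (ψ : Fin d2 × Fin dB → ℂ) (i : Fin d2) (j : Fin dB) :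
    emb2 d1 ψ (Fin.natAdd d1 i, j) = ψ (i, j) := by simp [emb2]

def bdiag {d1 d2 : ℕ} (M1 : Matrix (Fin d1) (Fin d1) ℂ) (M2 : Matrix (Fin d2) (Fin d2) ℂ) :
    Matrix (Fin (d1 + d2)) (Fin (d1 + d2)) ℂ :=
  (Matrix.fromBlocks M1 0 0 M2).submatrix finSumFinEquiv.symm finSumFinEquiv.symm

@[simp] lemma bdiag_cc {d1 d2 : ℕ} (M1 : Matrix (Fin d1) (Fin d1) ℂ)
    (M2 : Matrix (Fin d2) (Fin d2) ℂ) (i j : Fin d1) :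
    bdiag M1 M2 (Fin.castAdd d2 i) (Fin.castAdd d2 j) = M1 i j := by simp [bdiag]

@[simp] lemma bdiag_cn {d1 d2 : ℕ} (M1 : Matrix (Fin d1) (Fin d1) ℂ)
    (M2 : Matrix (Fin d2) (Fin d2) ℂ) (i : Fin d1) (j : Fin d2) :
    bdiag M1 M2 (Fin.castAdd d2 i) (Fin.natAdd d1 j) = 0 := by simp [bdiag]

@[simp] lemma bdiag_nc {d1 d2 : ℕ} (M1 : Matrix (Fin d1) (Fin d1) ℂ)
    (M2 : Matrix (Fin d2) (Fin d2) ℂ) (i : Fin d2) (j : Fin d1) :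
    bdiag M1 M2 (Fin.natAdd d1 i) (Fin.castAdd d2 j) = 0 := by simp [bdiag]

@[simp] lemma bdiag_nn {d1 d2 : ℕ} (M1 : Matrix (Fin d1) (Fin d1) ℂ)
    (M2 : Matrix (Fin d2) (Fin d2) ℂ) (i j : Fin d2) :
    bdiag M1 M2 (Fin.natAdd d1 i) (Fin.natAdd d1 j) = M2 i j := by simp [bdiag]

lemma fromBlocks_posSemidef {d1 d2 : ℕ} {M1 : Matrix (Fin d1) (Fin d1) ℂ}
    {M2 : Matrix (Fin d2) (Fin d2) ℂ} (h1 : M1.PosSemidef) (h2 : M2.PosSemidef) :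
    (Matrix.fromBlocks M1 0 0 M2).PosSemidef := by
  refine Matrix.PosSemidef.of_dotProduct_mulVec_nonneg ?_ ?_
  · simp [Matrix.IsHermitian, Matrix.fromBlocks_conjTranspose, h1.1.eq, h2.1.eq]
  · intro x
    obtain ⟨x1, x2, rfl⟩ : ∃ a b, x = Sum.elim a b :=
      ⟨x ∘ Sum.inl, x ∘ Sum.inr, by ext (i | i) <;> rfl⟩
    rw [Matrix.fromBlocks_mulVec]
    simp only [Matrix.zero_mulVec, add_zero, zero_add]
    have : star (Sum.elim x1 x2) = Sum.elim (star x1) (star x2) := by ext (i | i) <;> rfl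
    rw [this]
    simp only [dotProduct, Fintype.sum_sum_type, Sum.elim_inl, Sum.elim_inr]
    exact add_nonneg (h1.dotProduct_mulVec_nonneg x1) (h2.dotProduct_mulVec_nonneg x2)

lemma bdiag_posSemidef {d1 d2 : ℕ} {M1 : Matrix (Fin d1) (Fin d1) ℂ}
    {M2 : Matrix (Fin d2) (Fin d2) ℂ} (h1 : M1.PosSemidef) (h2 : M2.PosSemidef) :
    (bdiag M1 M2).PosSemidef :=
  (fromBlocks_posSemidef h1 h2).submatrix _

lemma bdiag_sum_one {d1 d2 : ℕ} {A : Type*} [Fintype A]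
    (M1 : A → Matrix (Fin d1) (Fin d1) ℂ) (M2 : A → Matrix (Fin d2) (Fin d2) ℂ)
    (h1 : ∑ a, M1 a = 1) (h2 : ∑ a, M2 a = 1) :
    ∑ a, bdiag (M1 a) (M2 a) = 1 := by
  have : ∑ a, bdiag (M1 a) (M2 a) = bdiag (∑ a, M1 a) (∑ a, M2 a) := by
    ext i j
    refine Fin.addCases (fun i1 => ?_) (fun i2 => ?_) i <;>
      refine Fin.addCases (fun j1 => ?_) (fun j2 => ?_) j <;>
        simp [Matrix.sum_apply]
  rw [this, h1, h2]
  ext i j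
  refine Fin.addCases (fun i1 => ?_) (fun i2 => ?_) i <;>
      refine Fin.addCases (fun j1 => ?_) (fun j2 => ?_) j
  · simp [Matrix.one_apply, Fin.ext_iff]
  · simp only [bdiag_cn, Matrix.one_apply, Fin.ext_iff, Fin.coe_castAdd, Fin.coe_natAdd]
    rw [if_neg (by omega)]
  · simp only [bdiag_nc, Matrix.one_apply, Fin.ext_iff, Fin.coe_castAdd, Fin.coe_natAdd]
    rw [if_neg (by omega)]
  · simp [Matrix.one_apply, Fin.ext_iff]

lemma schmidtRankLE_emb1 {d1 d2 dB n : ℕ} (ψ : Fin d1 × Fin dB → ℂ)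
    (hψ : SchmidtRankLE n ψ) : SchmidtRankLE n (emb1 d2 ψ) := by
  classical
  unfold SchmidtRankLE at *
  set P : Matrix (Fin (d1 + d2)) (Fin d1) ℂ :=
    Matrix.of fun i i1 => if i = Fin.castAdd d2 i1 then 1 else 0 with hP
  have key : (Matrix.of fun (i : Fin (d1 + d2)) (j : Fin dB) => emb1 d2 ψ (i, j))
      = P * (Matrix.of fun (i : Fin d1) (j : Fin dB) => ψ (i, j)) := by
    ext i j
    rw [Matrix.mul_apply]
    refine Fin.addCases (fun i0 => ?_) (fun i0 => ?_) i
    · have hc : ∀ i1 : Fin d1, (Fin.castAdd d2 i0 = Fin.castAdd d2 i1) ↔ i0 = i1 := by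
        intro i1; simp [Fin.ext_iff]
      simp [hP, hc, ite_mul]
    · have hc : ∀ i1 : Fin d1, ¬ (Fin.natAdd d1 i0 = Fin.castAdd d2 i1) := by
        intro i1 h
        have := congrArg Fin.val h
        simp at this; omega
      simp [hP, hc]
  rw [key]
  exact le_trans (Matrix.rank_mul_le_right _ _) hψ

lemma schmidtRankLE_emb2 {d1 d2 dB n : ℕ} (ψ : Fin d2 × Fin dB → ℂ)
    (hψ : SchmidtRankLE n ψ) : SchmidtRankLE n (emb2 d1 ψ) := by
  classical
  unfold SchmidtRankLE at *
  set P : Matrix (Fin (d1 + d2)) (Fin d2) ℂ :=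
    Matrix.of fun i i2 => if i = Fin.natAdd d1 i2 then 1 else 0 with hP
  have key : (Matrix.of fun (i : Fin (d1 + d2)) (j : Fin dB) => emb2 d1 ψ (i, j))
      = P * (Matrix.of fun (i : Fin d2) (j : Fin dB) => ψ (i, j)) := by
    ext i j
    rw [Matrix.mul_apply]
    refine Fin.addCases (fun i0 => ?_) (fun i0 => ?_) i
    · have hc : ∀ i2 : Fin d2, ¬ (Fin.castAdd d2 i0 = Fin.natAdd d1 i2) := by
        intro i2 h
        have := congrArg Fin.val h
        simp at this; omega
      simp [hP, hc]
    · have hc : ∀ i2 : Fin d2, (Fin.natAdd d1 i0 = Fin.natAdd d1 i2) ↔ i0 = i2 := by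
        intro i2; simp [Fin.ext_iff]
      simp [hP, hc, ite_mul]
  rw [key]
  exact le_trans (Matrix.rank_mul_le_right _ _) hψ

lemma norm_emb1 {d1 d2 dB : ℕ} (ψ : Fin d1 × Fin dB → ℂ) :
    ∑ v, star (emb1 d2 ψ v) * emb1 d2 ψ v = ∑ v, star (ψ v) * ψ v := by
  rw [Fintype.sum_prod_type, Fintype.sum_prod_type, Fin.sum_univ_add]
  simp

lemma norm_emb2 {d1 d2 dB : ℕ} (ψ : Fin d2 × Fin dB → ℂ) :
    ∑ v, star (emb2 d1 ψ v) * emb2 d1 ψ v = ∑ v, star (ψ v) * ψ v := by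
  rw [Fintype.sum_prod_type, Fintype.sum_prod_type, Fin.sum_univ_add]
  simp

lemma posSemidef_outer {m : Type*} [Fintype m] (v : m → ℂ) :
    (Matrix.vecMulVec v (star v)).PosSemidef := by
  refine Matrix.PosSemidef.of_dotProduct_mulVec_nonneg ?_ ?_
  · ext i j
    simp [Matrix.conjTranspose_apply, Matrix.vecMulVec_apply, mul_comm]
  · intro x
    have h : dotProduct (star x) (Matrix.vecMulVec v (star v) *ᵥ x)
        = star (dotProduct (star v) x) * (dotProduct (star v) x) := by
      simp only [dotProduct, Matrix.mulVec, Matrix.vecMulVec_apply, Pi.star_apply,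
        star_sum, star_mul', star_star, Finset.sum_mul, Finset.mul_sum, dotProduct]
      rw [Finset.sum_comm]
      congr 1; ext i; congr 1; ext j; ring
    rw [h]
    exact star_mul_self_nonneg _

lemma posSemidef_sum_outer {m : Type*} [Fintype m] {k : ℕ} (p : Fin k → ℝ)
    (hp : ∀ i, 0 ≤ p i) (ψ : Fin k → m → ℂ) :
    (∑ i, (p i : ℂ) • Matrix.vecMulVec (ψ i) (star (ψ i))).PosSemidef := by
  classical
  refine Finset.sum_induction _ _ (fun a b ha hb => ha.add hb) Matrix.PosSemidef.zero ?_
  intro i _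
  have houter := posSemidef_outer (ψ i)
  refine Matrix.PosSemidef.of_dotProduct_mulVec_nonneg ?_ ?_
  · unfold Matrix.IsHermitian
    rw [Matrix.conjTranspose_smul, houter.1.eq, Complex.star_def, Complex.conj_ofReal]
  · intro x
    rw [Matrix.smul_mulVec, dotProduct_smul, smul_eq_mul]
    exact mul_nonneg (by exact_mod_cast hp i) (houter.dotProduct_mulVec_nonneg x)

lemma trace_outer {m : Type*} [Fintype m] (v : m → ℂ) :
    (Matrix.vecMulVec v (star v)).trace = ∑ x, star (v x) * v x := by
  simp [Matrix.trace, Matrix.diag, Matrix.vecMulVec_apply, mul_comm]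

end Aux

lemma ptrA_bdiag_emb1 {d1 d2 dB : ℕ} (N1 : Matrix (Fin d1) (Fin d1) ℂ)
    (N2 : Matrix (Fin d2) (Fin d2) ℂ) (ψ : Fin d1 × Fin dB → ℂ) :
    ptrA ((bdiag N1 N2 ⊗ₖ (1 : Matrix (Fin dB) (Fin dB) ℂ)) *
        Matrix.vecMulVec (emb1 d2 ψ) (star (emb1 d2 ψ)))
      = ptrA ((N1 ⊗ₖ (1 : Matrix (Fin dB) (Fin dB) ℂ)) * Matrix.vecMulVec ψ (star ψ)) := by
  ext j j'
  simp only [ptrA, Matrix.of_apply, Matrix.mul_apply, Matrix.kroneckerMap_apply,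
    Matrix.vecMulVec_apply, Pi.star_apply, Fintype.sum_prod_type, Fin.sum_univ_add,
    emb1_cast, emb1_nat, star_zero, mul_zero, zero_mul, Finset.sum_const_zero, add_zero,
    bdiag_cc, bdiag_nc, bdiag_cn, bdiag_nn]

lemma ptrA_bdiag_emb2 {d1 d2 dB : ℕ} (N1 : Matrix (Fin d1) (Fin d1) ℂ)
    (N2 : Matrix (Fin d2) (Fin d2) ℂ) (ψ : Fin d2 × Fin dB → ℂ) :
    ptrA ((bdiag N1 N2 ⊗ₖ (1 : Matrix (Fin dB) (Fin dB) ℂ)) *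
        Matrix.vecMulVec (emb2 d1 ψ) (star (emb2 d1 ψ)))
      = ptrA ((N2 ⊗ₖ (1 : Matrix (Fin dB) (Fin dB) ℂ)) * Matrix.vecMulVec ψ (star ψ)) := by
  ext j j'
  simp only [ptrA, Matrix.of_apply, Matrix.mul_apply, Matrix.kroneckerMap_apply,
    Matrix.vecMulVec_apply, Pi.star_apply, Fintype.sum_prod_type, Fin.sum_univ_add,
    emb2_cast, emb2_nat, star_zero, mul_zero, zero_mul, Finset.sum_const_zero, add_zero,
    zero_add, bdiag_cc, bdiag_nc, bdiag_cn, bdiag_nn]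

/-- The set of assemblages preparable from states of Schmidt number at most `n` is convex. -/
theorem schmidtAssemblages_convex
    {dB n : ℕ} (hdB : 1 ≤ dB) (hn : 1 ≤ n)
    (X A : Type*) [Fintype X] [Fintype A] :
    Convex ℝ (SchmidtAssemblages dB n X A) := by
  intro f hf g hg t s ht hs hts
  obtain ⟨d1, Am1, ρ1, hAm1, hps1, htr1, ⟨k1, p1, ψ1, hp1, hp1s, hn1, hr1, hρ1eq⟩, hf1⟩ := hf
  obtain ⟨d2, Am2, ρ2, hAm2, hps2, htr2, ⟨k2, p2, ψ2, hp2, hp2s, hn2, hr2, hρ2eq⟩, hg1⟩ := hg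
  set p : Fin (k1 + k2) → ℝ := Fin.append (fun i => t * p1 i) (fun i => s * p2 i) with hpdef
  set ψ : Fin (k1 + k2) → (Fin (d1 + d2) × Fin dB → ℂ) :=
    Fin.append (fun i => emb1 d2 (ψ1 i)) (fun i => emb2 d1 (ψ2 i)) with hψdef
  have hpl : ∀ i : Fin k1, p (Fin.castAdd k2 i) = t * p1 i := by
    intro i; rw [hpdef, Fin.append_left]
  have hpr : ∀ i : Fin k2, p (Fin.natAdd k1 i) = s * p2 i := by
    intro i; rw [hpdef, Fin.append_right]
  have hψl : ∀ i : Fin k1, ψ (Fin.castAdd k2 i) = emb1 d2 (ψ1 i) := by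
    intro i; rw [hψdef, Fin.append_left]
  have hψr : ∀ i : Fin k2, ψ (Fin.natAdd k1 i) = emb2 d1 (ψ2 i) := by
    intro i; rw [hψdef, Fin.append_right]
  have hpnn : ∀ i, 0 ≤ p i := by
    refine Fin.addCases (fun i => ?_) (fun i => ?_)
    · rw [hpl]; exact mul_nonneg ht (hp1 i)
    · rw [hpr]; exact mul_nonneg hs (hp2 i)
  have hpsum : ∑ i, p i = 1 := by
    rw [Fin.sum_univ_add]
    simp only [hpl, hpr, ← Finset.mul_sum, hp1s, hp2s, mul_one]
    exact hts
  have hψnorm : ∀ i, ∑ v, star (ψ i v) * ψ i v = 1 := by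
    refine Fin.addCases (fun i => ?_) (fun i => ?_)
    · rw [hψl]; rw [norm_emb1]; exact hn1 i
    · rw [hψr]; rw [norm_emb2]; exact hn2 i
  have hψrank : ∀ i, SchmidtRankLE n (ψ i) := by
    refine Fin.addCases (fun i => ?_) (fun i => ?_)
    · rw [hψl]; exact schmidtRankLE_emb1 _ (hr1 i)
    · rw [hψr]; exact schmidtRankLE_emb2 _ (hr2 i)
  refine ⟨d1 + d2, fun x a => bdiag (Am1 x a) (Am2 x a),
    ∑ i, (p i : ℂ) • Matrix.vecMulVec (ψ i) (star (ψ i)), ?_, ?_, ?_, ?_, ?_⟩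
  · intro x
    exact ⟨fun a => bdiag_posSemidef ((hAm1 x).1 a) ((hAm2 x).1 a),
      bdiag_sum_one _ _ (hAm1 x).2 (hAm2 x).2⟩
  · exact posSemidef_sum_outer p hpnn ψ
  · rw [Matrix.trace_sum]
    simp only [Matrix.trace_smul, trace_outer, hψnorm, smul_eq_mul, mul_one]
    rw [← Complex.ofReal_sum, hpsum, Complex.ofReal_one]
  · exact ⟨k1 + k2, p, ψ, hpnn, hpsum, hψnorm, hψrank, rfl⟩
  · intro x a
    have hexp : ptrA ((bdiag (Am1 x a) (Am2 x a) ⊗ₖ (1 : Matrix (Fin dB) (Fin dB) ℂ)) *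
        ∑ i, (p i : ℂ) • Matrix.vecMulVec (ψ i) (star (ψ i)))
        = ∑ i, (p i : ℂ) • ptrA ((bdiag (Am1 x a) (Am2 x a) ⊗ₖ (1 : Matrix (Fin dB) (Fin dB) ℂ)) *
            Matrix.vecMulVec (ψ i) (star (ψ i))) := by
      rw [Finset.mul_sum]
      simp_rw [Matrix.mul_smul]
      rw [ptrA_sum]
      simp_rw [ptrA_smul]
    have h1 : ptrA ((Am1 x a ⊗ₖ (1 : Matrix (Fin dB) (Fin dB) ℂ)) * ρ1)
        = ∑ i, (p1 i : ℂ) • ptrA ((Am1 x a ⊗ₖ (1 : Matrix (Fin dB) (Fin dB) ℂ)) *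
            Matrix.vecMulVec (ψ1 i) (star (ψ1 i))) := by
      rw [hρ1eq, Finset.mul_sum]
      simp_rw [Matrix.mul_smul]
      rw [ptrA_sum]
      simp_rw [ptrA_smul]
    have h2 : ptrA ((Am2 x a ⊗ₖ (1 : Matrix (Fin dB) (Fin dB) ℂ)) * ρ2)
        = ∑ i, (p2 i : ℂ) • ptrA ((Am2 x a ⊗ₖ (1 : Matrix (Fin dB) (Fin dB) ℂ)) *
            Matrix.vecMulVec (ψ2 i) (star (ψ2 i))) := by
      rw [hρ2eq, Finset.mul_sum]
      simp_rw [Matrix.mul_smul]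
      rw [ptrA_sum]
      simp_rw [ptrA_smul]
    rw [hexp, Fin.sum_univ_add]
    simp only [hpl, hpr, hψl, hψr, ptrA_bdiag_emb1, ptrA_bdiag_emb2]
    have hsmul : ∀ (r : ℝ) (M : Matrix (Fin dB) (Fin dB) ℂ), r • M = (r : ℂ) • M := by
      intro r M; ext i j
      simp [Matrix.smul_apply, Complex.real_smul]
    simp only [Pi.add_apply, Pi.smul_apply, hsmul, hf1, hg1, h1, h2,
      Complex.ofReal_mul]
    simp_rw [mul_smul]
    rw [← Finset.smul_sum, ← Finset.smul_sum]
end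
end
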